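/- arXiv:1311.6285 — 4 statements merged into one kernel-verified Lean document; each statement's English description precedes it below -/
import Mathlib

section
/- Let $V$ be a real inner product space, let $S_1 \subseteq S_2$ be finite-dimensional affine subspaces of $V$, let $v \in S_1$ and $\rho > 0$. Let $\beta_{21} : \mathcal{A}_c(S_1) \to \mathcal{A}(S_2)$ be given on functions by $\beta_{21}(f)(x, s_2) = f(xu + s_{21}, s_1)$ where $s_2 = s_1 + s_{21}$ with $s_1 \in S_1$, $s_{21} \in S_2^0 \ominus S_1^0$, interpreted via functional calculus so that $\beta_{21}(f)(x,s_2)$ depends only on the values of $f(\cdot, s_1)$ at the points $\pm\sqrt{x^2 + \|s_{21}\|^2}$. If $\mathrm{supp}(f)$ is contained in the closed ball of radius $\rho$ centered at $(0,v)$ in $\mathbb{R} \times S_1$, then $\mathrm{supp}(\beta_{21}(f))$ is contained in the closed ball of radius $\rho$ centered at $(0,v)$ in $\mathbb{R} \times S_2$. In particular $\beta_{21}$ maps compactly supported elements to compactly supported elements. -/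
/-! Decompose `s₂ - v = p + q` with `p ∈ S₁⁰` and `q ⊥ S₁⁰`, so that `s₂ = s₁ + q` with
`s₁ = v + p ∈ S₁`. By Pythagoras `‖s₂ - v‖² = ‖s₁ - v‖² + ‖q‖²`, so both spectral points
`(±√(x² + ‖q‖²), s₁)` of `β₂₁ f` at `(x, s₂)` lie at squared distance
`x² + ‖s₂ - v‖² > ρ²` from `(0, v)`, where `f` vanishes. -/

open Real

namespace AffineSubspace

variable {V : Type*} [NormedAddCommGroup V] [InnerProductSpace ℝ V]

theorem exists_eq_add_mem_orthogonal_norm_sq (S : AffineSubspace ℝ V)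
    [S.direction.HasOrthogonalProjection] {v : V} (hv : v ∈ S) (w : V) :
    ∃ s ∈ S, ∃ n ∈ S.directionᗮ, w = s + n ∧ ‖w - v‖ ^ 2 = ‖s - v‖ ^ 2 + ‖n‖ ^ 2 := by
  set K := S.direction
  refine ⟨v + K.starProjection (w - v), ?_, Kᗮ.starProjection (w - v),
    Kᗮ.starProjection_apply_mem _, ?_, ?_⟩
  · rw [add_comm]
    exact S.vadd_mem_of_mem_direction (K.starProjection_apply_mem _) hv
  · rw [add_assoc, K.starProjection_add_starProjection_orthogonal]
    abel
  · rw [add_sub_cancel_left]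
    exact Submodule.norm_sq_eq_add_norm_sq_projection (w - v) K

end AffineSubspace

theorem stmt5_general {V : Type*} [NormedAddCommGroup V] [InnerProductSpace ℝ V]
    {A : Type*} [Zero A]
    (S₁ S₂ : AffineSubspace ℝ V)
    [FiniteDimensional ℝ S₁.direction]
    (v : V) (hv : v ∈ S₁) (ρ : ℝ)
    (f g : ℝ → V → A)
    -- `supp f` is contained in the closed ball of radius `ρ` about `(0,v)` in `ℝ × S₁`:
    (hsupp : ∀ (t : ℝ) (s : V), s ∈ S₁ → ρ ^ 2 < t ^ 2 + ‖s - v‖ ^ 2 → f t s = 0)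
    -- defining property of `g = β₂₁ f` via functional calculus:
    (hβ : ∀ (x : ℝ) (s₂ : V), s₂ ∈ S₂ →
      ∀ s₁ s₂₁ : V, s₁ ∈ S₁ → s₂₁ ∈ S₁.directionᗮ → s₂ = s₁ + s₂₁ →
        f (Real.sqrt (x ^ 2 + ‖s₂₁‖ ^ 2)) s₁ = 0 →
        f (-Real.sqrt (x ^ 2 + ‖s₂₁‖ ^ 2)) s₁ = 0 →
        g x s₂ = 0) :
    -- `supp g` is contained in the closed ball of radius `ρ` about `(0,v)` in `ℝ × S₂`:
    ∀ (x : ℝ) (s₂ : V), s₂ ∈ S₂ → ρ ^ 2 < x ^ 2 + ‖s₂ - v‖ ^ 2 → g x s₂ = 0 := by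
  intro x s₂ hs₂ hlt
  obtain ⟨s₁, hs₁, q, hq, rfl, hpyth⟩ := S₁.exists_eq_add_mem_orthogonal_norm_sq hv s₂
  have hout : ρ ^ 2 < (√(x ^ 2 + ‖q‖ ^ 2)) ^ 2 + ‖s₁ - v‖ ^ 2 := by
    rw [sq_sqrt (by positivity)]
    linarith
  exact hβ x _ hs₂ s₁ q hs₁ hq rfl (hsupp _ _ hs₁ hout) (hsupp _ _ hs₁ (by rwa [neg_sq]))

/-- support estimate for the connecting map `β₂₁ : 𝒜_c(S₁) → 𝒜(S₂)`.
`V` is a real inner product space, `S₁ ⊆ S₂` finite-dimensional affine subspaces,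
`v ∈ S₁`, `ρ > 0`.  The element `f` of `𝒜_c(S₁)` is encoded as a (Clifford-algebra
valued) function `f : ℝ → V → A` (only its values `f t s` for `s ∈ S₁` matter), and
`g = β₂₁(f)` as a function `g : ℝ → V → A`; the defining property of `β₂₁` via
functional calculus is encoded by the hypothesis `hβ`: for `s₂ = s₁ + s₂₁ ∈ S₂` with
`s₁ ∈ S₁` and `s₂₁ ⊥ S₁⁰`, the value `g x s₂` vanishes as soon as `f (· , s₁)` vanishes
at the two spectral points `±√(x² + ‖s₂₁‖²)` of `xu + s₂₁`.  Conclusion: if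
`supp f ⊆ D¹((0,v),ρ)` then `supp g ⊆ D²((0,v),ρ)`; in particular `β₂₁` maps compactly
supported elements to compactly supported elements. -/
theorem stmt5 {V : Type*} [NormedAddCommGroup V] [InnerProductSpace ℝ V]
    {A : Type*} [Zero A]
    (S₁ S₂ : AffineSubspace ℝ V) (hS : S₁ ≤ S₂)
    [FiniteDimensional ℝ S₁.direction] [FiniteDimensional ℝ S₂.direction]
    (v : V) (hv : v ∈ S₁) (ρ : ℝ) (hρ : 0 < ρ)
    (f g : ℝ → V → A)
    -- `supp f` is contained in the closed ball of radius `ρ` about `(0,v)` in `ℝ × S₁`: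
    (hsupp : ∀ (t : ℝ) (s : V), s ∈ S₁ → ρ ^ 2 < t ^ 2 + ‖s - v‖ ^ 2 → f t s = 0)
    -- defining property of `g = β₂₁ f` via functional calculus:
    (hβ : ∀ (x : ℝ) (s₂ : V), s₂ ∈ S₂ →
      ∀ s₁ s₂₁ : V, s₁ ∈ S₁ → s₂₁ ∈ S₁.directionᗮ → s₂ = s₁ + s₂₁ →
        f (Real.sqrt (x ^ 2 + ‖s₂₁‖ ^ 2)) s₁ = 0 →
        f (-Real.sqrt (x ^ 2 + ‖s₂₁‖ ^ 2)) s₁ = 0 →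
        g x s₂ = 0) :
    -- `supp g` is contained in the closed ball of radius `ρ` about `(0,v)` in `ℝ × S₂`:
    ∀ (x : ℝ) (s₂ : V), s₂ ∈ S₂ → ρ ^ 2 < x ^ 2 + ‖s₂ - v‖ ^ 2 → g x s₂ = 0 :=
  stmt5_general S₁ S₂ v hv ρ f g hsupp hβ
end

section
/- Let $S \subseteq T$ be finite-dimensional affine subspaces of a real inner product space $V$, and write each $t \in T$ uniquely as $t = \pi_S(t) + \pi_S^\perp(t)$ with $\pi_S(t) \in S$ and $\pi_S^\perp(t) \in T^0 \ominus S^0$. Define $p_{ST} : \mathbb{R}_{\ge 0} \times T \to \mathbb{R}_{\ge 0} \times S$ by $p_{ST}(x,t) = (\sqrt{x^2 + \|\pi_S^\perp(t)\|^2}, \pi_S(t))$. Then $p_{ST}$ is a continuous proper map (preimages of compact sets are compact), and for $S \subseteq T \subseteq T'$ one has $p_{ST'} = p_{ST} \circ p_{TT'}$. -/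
/-! Since `‖p‖ ≤ 2 ‖p_S p‖`, the preimage of a compact set is a closed bounded subset of
`ℝ × T`, which is a proper metric space because `T` is finite-dimensional. Functoriality is
`π_S ∘ π_T = π_S` together with Pythagoras, `‖v - π_S v‖² = ‖v - π_T v‖² + ‖π_T v - π_S v‖²`. -/

open EuclideanGeometry

variable {V : Type*} [NormedAddCommGroup V] [InnerProductSpace ℝ V]

/-- The map `p_S : ℝ₊ × V ⊇ ℝ₊ × T → ℝ₊ × S`,
`p_S(x,t) = (√(x² + ‖π_S^⊥(t)‖²), π_S(t))`, where `π_S` is the nearest-point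
(orthogonal) projection onto the affine subspace `S`. -/
noncomputable def pST (S : AffineSubspace ℝ V) [Nonempty S]
    [Submodule.HasOrthogonalProjection S.direction] (p : ℝ × V) : ℝ × V :=
  (Real.sqrt (p.1 ^ 2 + ‖p.2 - (EuclideanGeometry.orthogonalProjection S p.2 : V)‖ ^ 2),
    (EuclideanGeometry.orthogonalProjection S p.2 : V))

/-- The domain `ℝ₊ × T ⊆ ℝ × V`. -/
def domT (T : AffineSubspace ℝ V) : Set (ℝ × V) := {p | 0 ≤ p.1 ∧ p.2 ∈ T}

theorem AffineSubspace.properSpace (T : AffineSubspace ℝ V) [Nonempty T]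
    [FiniteDimensional ℝ T.direction] : ProperSpace T :=
  let e := AffineIsometryEquiv.vaddConst ℝ (Classical.arbitrary T)
  e.isometry.antilipschitz.properSpace e.continuous e.surjective

theorem isCompact_of_isClosed_isBounded_of_forall_snd_mem {X : Type*} [MetricSpace X]
    [ProperSpace X] {T : AffineSubspace ℝ V} [Nonempty T] [FiniteDimensional ℝ T.direction]
    {A : Set (X × V)} (hc : IsClosed A) (hb : Bornology.IsBounded A) (hT : ∀ p ∈ A, p.2 ∈ T) :
    IsCompact A := by
  have := T.properSpace
  have hf : Isometry (Prod.map id ((↑) : T → V)) :=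
    (isometry_id (α := X)).prodMap isometry_subtype_coe
  refine (hf.isEmbedding.isInducing.isCompact_preimage_iff ?_).1 <|
    Metric.isCompact_of_isClosed_isBounded (hc.preimage hf.continuous)
      (hf.antilipschitz.isBounded_preimage hb)
  intro p hp
  exact ⟨(p.1, ⟨p.2, hT p hp⟩), rfl⟩

theorem isClosed_domT (T : AffineSubspace ℝ V) [FiniteDimensional ℝ T.direction] :
    IsClosed (domT T) :=
  (isClosed_le continuous_const continuous_fst).inter
    (T.closed_of_finiteDimensional.preimage continuous_snd)

section pST

variable (S : AffineSubspace ℝ V) [Nonempty S] [S.direction.HasOrthogonalProjection]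

theorem continuous_pST : Continuous (pST S) := by
  have : Continuous fun v : V => (orthogonalProjection S v : V) :=
    continuous_subtype_val.comp (orthogonalProjection S).continuous
  unfold pST
  fun_prop

theorem pST_mem_domT (p : ℝ × V) : pST S p ∈ domT S :=
  ⟨Real.sqrt_nonneg _, orthogonalProjection_mem _⟩

theorem norm_le_two_mul_norm_pST (p : ℝ × V) : ‖p‖ ≤ 2 * ‖pST S p‖ := by
  set π := (orthogonalProjection S p.2 : V)
  set d := ‖p.2 - π‖
  set r := √(p.1 ^ 2 + d ^ 2)
  have hq : pST S p = (r, π) := rfl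
  have hx : |p.1| ≤ r := Real.abs_le_sqrt (le_add_of_nonneg_right (sq_nonneg d))
  have hd : d ≤ r := Real.le_sqrt_of_sq_le (le_add_of_nonneg_left (sq_nonneg _))
  have hv : ‖p.2‖ ≤ d + ‖π‖ := norm_le_norm_sub_add p.2 π
  rw [hq, Prod.norm_def, Prod.norm_def, Real.norm_eq_abs, Real.norm_eq_abs,
    abs_of_nonneg (Real.sqrt_nonneg _), max_le_iff]
  constructor <;> linarith [le_max_left r ‖π‖, le_max_right r ‖π‖, norm_nonneg π]

theorem isBounded_preimage_pST {K : Set (ℝ × V)} (hK : Bornology.IsBounded K) :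
    Bornology.IsBounded (pST S ⁻¹' K) := by
  obtain ⟨C, hC⟩ := isBounded_iff_forall_norm_le.1 hK
  exact isBounded_iff_forall_norm_le.2
    ⟨2 * C, fun p hp => (norm_le_two_mul_norm_pST S p).trans (by linarith [hC _ hp])⟩

theorem norm_sub_orthogonalProjection_sq_of_le {T : AffineSubspace ℝ V} [Nonempty T]
    [T.direction.HasOrthogonalProjection] (hST : S ≤ T) (v : V) :
    ‖v - (orthogonalProjection S v : V)‖ ^ 2 =
      ‖v - (orthogonalProjection T v : V)‖ ^ 2 +
        ‖(orthogonalProjection T v : V) - (orthogonalProjection S v : V)‖ ^ 2 := by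
  have := dist_sq_eq_dist_orthogonalProjection_sq_add_dist_orthogonalProjection_sq (s := T) v
    (hST (orthogonalProjection_mem (s := S) v))
  simp only [dist_eq_norm, ← sq] at this
  rw [norm_sub_rev, this, norm_sub_rev (orthogonalProjection S v : V), add_comm]

theorem pST_pST_of_le {T : AffineSubspace ℝ V} [Nonempty T] [T.direction.HasOrthogonalProjection]
    (hST : S ≤ T) (p : ℝ × V) : pST S (pST T p) = pST S p := by
  simp only [pST, orthogonalProjection_orthogonalProjection_of_le hST]
  rw [Real.sq_sqrt (by positivity), norm_sub_orthogonalProjection_sq_of_le S hST, add_assoc]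

end pST

theorem stmt10_general (S T T' : AffineSubspace ℝ V)
    [Nonempty S] [Nonempty T]
    [Submodule.HasOrthogonalProjection S.direction] [Submodule.HasOrthogonalProjection T.direction]
    [FiniteDimensional ℝ T.direction]
    (hST : S ≤ T) :
    -- `p_ST` maps `ℝ₊ × T` into `ℝ₊ × S`:
    (∀ p ∈ domT T, pST S p ∈ domT S) ∧
    -- continuity:
    ContinuousOn (pST S) (domT T) ∧
    -- properness: preimages (inside the domain `ℝ₊ × T`) of compact sets are compact:
    (∀ K : Set (ℝ × V), K ⊆ domT S → IsCompact K →
      IsCompact (pST S ⁻¹' K ∩ domT T)) ∧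
    -- functoriality `p_ST' = p_ST ∘ p_TT'` on `ℝ₊ × T'`:
    (∀ p ∈ domT T', pST S p = pST S (pST T p)) := by
  refine ⟨fun p _ => pST_mem_domT S p, (continuous_pST S).continuousOn, fun K _ hK => ?_,
    fun p _ => (pST_pST_of_le S hST p).symm⟩
  exact isCompact_of_isClosed_isBounded_of_forall_snd_mem
    ((hK.isClosed.preimage (continuous_pST S)).inter (isClosed_domT T))
    ((isBounded_preimage_pST S hK.isBounded).subset Set.inter_subset_left)
    (fun p hp => hp.2.2)

/-- for finite-dimensional affine subspaces `S ⊆ T` of a real inner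
product space, the map `p_ST : ℝ₊ × T → ℝ₊ × S`,
`p_ST(x,t) = (√(x² + ‖π_S^⊥(t)‖²), π_S(t))`, is continuous and proper (preimages of
compact sets are compact), and for `S ⊆ T ⊆ T'` one has `p_ST' = p_ST ∘ p_TT'`. -/
theorem stmt10 (S T T' : AffineSubspace ℝ V)
    [Nonempty S] [Nonempty T] [Nonempty T']
    [Submodule.HasOrthogonalProjection S.direction] [Submodule.HasOrthogonalProjection T.direction]
    [FiniteDimensional ℝ S.direction] [FiniteDimensional ℝ T.direction]
    [FiniteDimensional ℝ T'.direction]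
    (hST : S ≤ T) (hTT' : T ≤ T') :
    -- `p_ST` maps `ℝ₊ × T` into `ℝ₊ × S`:
    (∀ p ∈ domT T, pST S p ∈ domT S) ∧
    -- continuity:
    ContinuousOn (pST S) (domT T) ∧
    -- properness: preimages (inside the domain `ℝ₊ × T`) of compact sets are compact:
    (∀ K : Set (ℝ × V), K ⊆ domT S → IsCompact K →
      IsCompact (pST S ⁻¹' K ∩ domT T)) ∧
    -- functoriality `p_ST' = p_ST ∘ p_TT'` on `ℝ₊ × T'`:
    (∀ p ∈ domT T', pST S p = pST S (pST T p)) :=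
  stmt10_general S T T' hST
end

section
/- Let $G$ be a group, $H \le G$ a subgroup, and let $A$ be a complex $*$-algebra on which $G$ acts, equipped with a full compatible $(G, \mathbb{C}^{(G/H)})$-structure, where $\mathbb{C}^{(G/H)}$ is the algebra of finitely supported functions $G/H \to \mathbb{C}$ with $G$ acting by translation. For $x \in G/H$ let $A_x = \chi_x \cdot A$, where $\chi_x$ is the characteristic function of $\{x\}$. Then: (a) $A = \bigoplus_{x \in G/H} A_x$ as an internal direct sum of $*$-subalgebras; (b) $A_x A_y = 0$ for $x \neq y$; (c) $g \cdot A_x = A_{gx}$ for all $g \in G$; in particular $A_H$ (where $H$ denotes the coset $eH$) is an $H$-invariant $*$-subalgebra. -/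
open Finsupp

/-- let `G` be a group, `H ≤ G` a subgroup, and `A` a complex `*`-algebra
with a `G`-action by `*`-automorphisms, carrying a full compatible
`(G, ℂ^(G/H))`-structure `dot`, where `ℂ^(G/H) = (G⧸H) →₀ ℂ` with pointwise
multiplication and `G` acting by translation.  With `χ_x = single x 1` and
`A_x = χ_x · A`: (a) `A = ⊕_{x ∈ G/H} A_x` as an internal direct sum of
`*`-subalgebras; (b) `A_x A_y = 0` for `x ≠ y`; (c) `g · A_x = A_{gx}`; in particular
`A_H` is an `H`-invariant `*`-subalgebra. -/
theorem stmt13 {G : Type*} [Group G] (H : Subgroup G)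
    {A : Type*} [NonUnitalRing A] [StarRing A] [Module ℂ A]
    -- the `G`-action on `A` by `*`-automorphisms:
    (act : G → A → A)
    (hact_one : ∀ a, act 1 a = a)
    (hact_mul : ∀ g g' a, act g (act g' a) = act (g * g') a)
    (hact_add : ∀ g a b, act g (a + b) = act g a + act g b)
    (hact_ring : ∀ g a b, act g (a * b) = act g a * act g b)
    (hact_star : ∀ g a, act g (star a) = star (act g a))
    -- the compatible `ℂ^(G/H)`-bimodule structure `c · a` on `A`:
    (dot : ((G ⧸ H) →₀ ℂ) → A → A)
    (hdot_addc : ∀ c c' a, dot (c + c') a = dot c a + dot c' a)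
    (hdot_adda : ∀ c a b, dot c (a + b) = dot c a + dot c b)
    (hdot_mulc : ∀ c c' a, dot (c * c') a = dot c (dot c' a))
    -- `c·(ab) = (c·a)b = a(c·b)` (this also encodes `c·a = a·c`):
    (hdot_mul_left : ∀ c a b, dot c (a * b) = dot c a * b)
    (hdot_mul_right : ∀ c a b, dot c (a * b) = a * dot c b)
    -- `(λc)·a = c·(λa)`:
    (hdot_smul : ∀ (l : ℂ) c a, dot (l • c) a = dot c (l • a))
    -- `g(c·a) = g(c)·g(a)`, with `G` acting on `ℂ^(G/H)` by translation:
    (hdot_equiv : ∀ g c a,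
      act g (dot c a) = dot (Finsupp.mapDomain (fun x : G ⧸ H => g • x) c) (act g a))
    -- `(c·a)^* = c^*·a^*`:
    (hdot_star : ∀ c a,
      star (dot c a) = dot (Finsupp.mapRange (starRingEnd ℂ) (map_zero _) c) (star a))
    -- fullness: `ℂ^(G/H) · A = A`:
    (hfull : ∀ a : A, a ∈ AddSubgroup.closure {x : A | ∃ c b, x = dot c b}) :
    -- with `A_x = χ_x · A`:
    letI Ax : (G ⧸ H) → Set A := fun x => Set.range (dot (Finsupp.single x 1))
    -- each `A_x` is a `*`-subalgebra:
    (∀ x, ∀ a ∈ Ax x, ∀ b ∈ Ax x, a + b ∈ Ax x ∧ a * b ∈ Ax x) ∧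
    (∀ x, ∀ a ∈ Ax x, star a ∈ Ax x ∧ -a ∈ Ax x) ∧
    -- (a) `A = ⊕_x A_x`: every element is a finite sum of elements of the `A_x`,
    (∀ a : A, ∃ (s : Finset (G ⧸ H)) (F : (G ⧸ H) → A),
      (∀ x, F x ∈ Ax x) ∧ a = ∑ x ∈ s, F x) ∧
    -- ... uniquely (the sum is direct):
    (∀ (s : Finset (G ⧸ H)) (F : (G ⧸ H) → A),
      (∀ x, F x ∈ Ax x) → ∑ x ∈ s, F x = 0 → ∀ x ∈ s, F x = 0) ∧
    -- (b) `A_x A_y = 0` for `x ≠ y`: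
    (∀ x y : G ⧸ H, x ≠ y → ∀ a ∈ Ax x, ∀ b ∈ Ax y, a * b = 0) ∧
    -- (c) `g · A_x = A_{gx}`:
    (∀ (g : G) (x : G ⧸ H), act g '' Ax x = Ax (g • x)) ∧
    -- in particular `A_H` is `H`-invariant:
    (∀ h ∈ H, act h '' Ax ((1 : G) : G ⧸ H) = Ax ((1 : G) : G ⧸ H)) := by
  classical
  set χ : (G ⧸ H) → ((G ⧸ H) →₀ ℂ) := fun x => Finsupp.single x 1 with hχ
  -- basic additivity facts
  have hdot0a : ∀ c, dot c (0 : A) = 0 := by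
    intro c
    have h := hdot_adda c 0 0
    rw [add_zero] at h
    exact (left_eq_add.mp h)
  have hdot0c : ∀ a, dot (0 : (G ⧸ H) →₀ ℂ) a = 0 := by
    intro a
    have h := hdot_addc 0 0 a
    rw [add_zero] at h
    exact (left_eq_add.mp h)
  have hdotneg : ∀ c a, dot c (-a) = - dot c a := by
    intro c a
    have h := hdot_adda c a (-a)
    rw [add_neg_cancel, hdot0a] at h
    exact (neg_eq_of_add_eq_zero_right h.symm).symm
  have hdotsum : ∀ c (s : Finset (G ⧸ H)) (f : (G ⧸ H) → A),
      dot c (∑ x ∈ s, f x) = ∑ x ∈ s, dot c (f x) := by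
    intro c s f
    exact map_sum (AddMonoidHom.mk' (dot c) (hdot_adda c)) f s
  have hdotsumc : ∀ (a : A) (s : Finset (G ⧸ H)) (f : (G ⧸ H) → ((G ⧸ H) →₀ ℂ)),
      dot (∑ x ∈ s, f x) a = ∑ x ∈ s, dot (f x) a := by
    intro a s f
    exact map_sum (AddMonoidHom.mk' (fun c => dot c a) (fun c c' => hdot_addc c c' a)) f s
  -- χ facts
  have hχmul : ∀ x (c : (G ⧸ H) →₀ ℂ), χ x * c = Finsupp.single x (c x) := by
    intro x c
    ext z
    rw [Finsupp.mul_apply]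
    simp only [hχ, Finsupp.single_apply]
    split_ifs with h
    · subst h; rw [one_mul]
    · rw [zero_mul]
  have hχidem : ∀ x, χ x * χ x = χ x := by
    intro x
    rw [hχmul]
    simp [hχ]
  have hχne : ∀ x y, x ≠ y → χ x * χ y = 0 := by
    intro x y hxy
    rw [hχmul]
    simp [hχ, Finsupp.single_apply, Ne.symm hxy]
  -- fixed-point characterization
  have hfix : ∀ x, ∀ a ∈ Set.range (dot (χ x)), dot (χ x) a = a := by
    rintro x a ⟨b, rfl⟩
    rw [← hdot_mulc, hχidem]
  have hann : ∀ x y, x ≠ y → ∀ a ∈ Set.range (dot (χ y)), dot (χ x) a = 0 := by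
    rintro x y hxy a ⟨b, rfl⟩
    rw [← hdot_mulc, hχne x y hxy, hdot0c]
  -- the key decomposition lemma
  have key : ∀ a : A, ∃ s : Finset (G ⧸ H),
      ∀ t : Finset (G ⧸ H), s ⊆ t → a = ∑ x ∈ t, dot (χ x) a := by
    intro a
    refine AddSubgroup.closure_induction ?_ ?_ ?_ ?_ (hfull a)
    · rintro z ⟨c, b, rfl⟩
      refine ⟨c.support, fun t ht => ?_⟩
      have hc0 : c = ∑ x ∈ t, Finsupp.single x (c x) := by
        rw [← Finset.sum_subset ht (fun x _ hx => by
          simp [Finsupp.notMem_support_iff.mp hx])]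
        exact (Finsupp.sum_single c).symm
      calc dot c b = dot (∑ x ∈ t, Finsupp.single x (c x)) b := by rw [← hc0]
        _ = ∑ x ∈ t, dot (Finsupp.single x (c x)) b := hdotsumc b t _
        _ = ∑ x ∈ t, dot (χ x) (dot c b) := by
            refine Finset.sum_congr rfl fun x _ => ?_
            rw [← hdot_mulc, hχmul]
    · exact ⟨∅, fun t _ => by simp [hdot0a]⟩
    · rintro u v _ _ ⟨s₁, h1⟩ ⟨s₂, h2⟩
      refine ⟨s₁ ∪ s₂, fun t ht => ?_⟩
      rw [Finset.sum_congr rfl (fun x _ => hdot_adda (χ x) u v), Finset.sum_add_distrib,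
        ← h1 t (Finset.subset_union_left.trans ht),
        ← h2 t (Finset.subset_union_right.trans ht)]
    · rintro u _ ⟨s, h1⟩
      refine ⟨s, fun t ht => ?_⟩
      rw [Finset.sum_congr rfl (fun x _ => hdotneg (χ x) u), Finset.sum_neg_distrib,
        ← h1 t ht]
  -- part (c) proved up front
  have hc : ∀ (g : G) (x : G ⧸ H),
      act g '' Set.range (dot (χ x)) = Set.range (dot (χ (g • x))) := by
    intro g x
    ext z
    constructor
    · rintro ⟨w, ⟨b, rfl⟩, rfl⟩
      refine ⟨act g b, ?_⟩
      rw [hdot_equiv]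
      congr 1
      simp [hχ, Finsupp.mapDomain_single]
    · rintro ⟨b, rfl⟩
      refine ⟨act g⁻¹ (dot (χ (g • x)) b), ⟨?_, ?_⟩⟩
      · refine ⟨act g⁻¹ b, ?_⟩
        rw [hdot_equiv]
        congr 1
        simp [hχ, Finsupp.mapDomain_single, smul_smul]
      · rw [hact_mul, mul_inv_cancel, hact_one]
  refine ⟨?_, ?_, ?_, ?_, ?_, hc, ?_⟩
  · -- subalgebra: add, mul
    rintro x a ⟨a', rfl⟩ b ⟨b', rfl⟩
    exact ⟨⟨a' + b', hdot_adda _ _ _⟩,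
      ⟨a' * dot (χ x) b', hdot_mul_left _ _ _⟩⟩
  · -- star, neg
    rintro x a ⟨a', rfl⟩
    constructor
    · refine ⟨star a', ?_⟩
      rw [hdot_star]
      congr 1
      simp [hχ, Finsupp.mapRange_single]
    · exact ⟨-a', hdotneg _ _⟩
  · -- (a) existence
    intro a
    obtain ⟨s, hs⟩ := key a
    exact ⟨s, fun x => dot (χ x) a, fun x => ⟨a, rfl⟩, hs s (subset_refl s)⟩
  · -- (a) uniqueness
    intro s F hF hsum x hx
    have h1 : dot (χ x) (∑ y ∈ s, F y) = F x := by
      rw [hdotsum]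
      rw [Finset.sum_eq_single_of_mem x hx (fun y _ hy => hann x y (Ne.symm hy) (F y) (hF y))]
      exact hfix x (F x) (hF x)
    rw [hsum, hdot0a] at h1
    exact h1.symm
  · -- (b)
    rintro x y hxy a ha b hb
    rw [← hfix x a ha, ← hfix y b hb, ← hdot_mul_left, ← hdot_mul_right, ← hdot_mulc,
      hχne x y hxy, hdot0c]
  · -- H-invariance
    intro h hh
    have e : h • ((1 : G) : G ⧸ H) = ((1 : G) : G ⧸ H) :=
      QuotientGroup.eq.mpr (by simpa using inv_mem hh)
    have := hc h ((1 : G) : G ⧸ H)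
    rwa [e] at this
end

section
/- Let $G$ be a group, $H \le G$ a subgroup, and let $A$, $B$ be commutative complex $G$-$*$-algebras with $A$ proper over $G/H$ (i.e., $A$ carries a full compatible $(G,\mathbb{C}^{(G/H)})$-algebra structure). Suppose $B$ carries a full compatible $(G,A)$-algebra structure, and suppose each $A_x = \chi_x \cdot A$ admits a bounded approximate unit in the purely algebraic sense that for every finite set $a_1,\dots,a_n \in A_x$ and $b \in B$ with $b = \sum a_i \cdot b_i$, there exist elements $e_\lambda \in A_x$ with $e_\lambda b \to b$ (e.g., $A$ a bornolocal $C^*$-algebra and $B$ normed with $\|c \cdot b\| \le \|c\|\,\|b\|$). Then, setting $B_x = A_x \cdot B$, one has $B_x \cap B_y = 0$ for $x \neq y$, $B = \bigoplus_x B_x$, and the action $(\sum_x \lambda_x \chi_x)\cdot(\sum_x b_x) = \sum_x \lambda_x b_x$ defines a full compatible $(G, \mathbb{C}^{(G/H)})$-algebra structure on $B$; hence $B$ is proper over $G/H$. -/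
/-!
Write `χ_x = single x 1`. The `χ_x` are orthogonal idempotents of `ℂ^(G/H)`, so fullness makes
`A` the internal direct sum of the `A_x = χ_x · A`. Elements of `A_x` annihilate `B_y` for
`y ≠ x`, while an approximate unit of `A_x` shows that `0` is the only element of `B_x`
annihilated by all of `A_x`; together with fullness of `B` this makes `B` the internal direct
sum of the `B_x`. The function `c` then acts on the `x`-component by `c x • _`. Compatibility
with the `G`-action, the star and the multiplication is checked componentwise; it reduces to the
(semi)linearity of these maps, which propagates from `ℂ^(G/H)` to `A` and from `A` to `B` along
the full actions.
-/

open Finsupp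

namespace DirectSum

section Decomposition

variable {ι M : Type*} [DecidableEq ι]

theorem isInternal_addSubgroup_of_iSupIndep [AddCommGroup M] {N : ι → AddSubgroup M}
    (hind : iSupIndep N) (hspan : iSup N = ⊤) : IsInternal N := by
  refine ⟨hind.dfinsuppSumAddHom_injective, ?_⟩
  rw [← AddMonoidHom.range_eq_top, eq_top_iff, ← hspan]
  exact iSup_le fun i m hm => ⟨of _ i ⟨m, hm⟩, coeAddMonoidHom_of _ _ _⟩

variable {S : Type*} [AddCommMonoid M] [SetLike S M] [AddSubmonoidClass S M] (ℳ : ι → S)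
  [Decomposition ℳ]

theorem decompose_ext {m m' : M} (h : ∀ i, (decompose ℳ m i : M) = decompose ℳ m' i) :
    m = m' :=
  (decompose ℳ).injective <| DFinsupp.ext fun i => Subtype.ext (h i)

theorem decompose_map_of_mapsTo {f : M →+ M} {σ : ι → ι} (hσ : Function.Injective σ)
    (hf : ∀ i, ∀ m ∈ ℳ i, f m ∈ ℳ (σ i)) (m : M) (i : ι) :
    (decompose ℳ (f m) (σ i) : M) = f (decompose ℳ m i) := by
  induction m using Decomposition.inductionOn ℳ generalizing i with
  | zero => simp
  | @homogeneous j m =>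
    by_cases hij : j = i
    · subst hij
      rw [decompose_of_mem_same _ (hf _ _ m.2), decompose_coe, of_eq_same]
    · rw [decompose_of_mem_ne _ (hf _ _ m.2) (hσ.ne hij), decompose_of_mem_ne _ m.2 hij,
        map_zero]
  | add m m' hm hm' => simp only [map_add, decompose_add, add_apply, AddMemClass.coe_add, hm, hm']

theorem eq_zero_of_sum_eq_zero {s : Finset ι} {F : ι → M} (hF : ∀ i, F i ∈ ℳ i)
    (hsum : ∑ i ∈ s, F i = 0) {i : ι} (hi : i ∈ s) : F i = 0 := by
  have h := congrArg (fun m => (decompose ℳ m i : M)) hsum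
  simp only [decompose_sum, decompose_zero, zero_apply, ZeroMemClass.coe_zero] at h
  rwa [DFinsupp.finsetSum_apply, AddSubmonoidClass.coe_finsetSum,
    Finset.sum_eq_single_of_mem i hi fun j _ hji => decompose_of_mem_ne ℳ (hF j) hji,
    decompose_of_mem_same ℳ (hF i)] at h

end Decomposition

section ComponentSMul

variable {X R M : Type*} [DecidableEq X] [CommSemiring R] [AddCommGroup M] [Module R M]
  (ℳ : X → AddSubgroup M) [Decomposition ℳ]

noncomputable def componentSMul (c : X →₀ R) (m : M) : M :=
  c.sum fun x l => l • (decompose ℳ m x : M)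

theorem componentSMul_single (x : X) (l : R) (m : M) :
    componentSMul ℳ (single x l) m = l • (decompose ℳ m x : M) :=
  sum_single_index (zero_smul _ _)

theorem componentSMul_add_left (c c' : X →₀ R) (m : M) :
    componentSMul ℳ (c + c') m = componentSMul ℳ c m + componentSMul ℳ c' m :=
  sum_add_index' (fun _ => zero_smul _ _) fun _ _ _ => add_smul _ _ _

theorem mem_closure_componentSMul (m : M) :
    m ∈ AddSubgroup.closure {y | ∃ (c : X →₀ R) (m' : M), y = componentSMul ℳ c m'} := by
  classical
  rw [← sum_support_decompose ℳ m]
  refine sum_mem fun x _ => AddSubgroup.subset_closure ⟨single x 1, m, ?_⟩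
  rw [componentSMul_single, one_smul]

variable {ℳ}

theorem componentSMul_single_of_mem {x : X} {m : M} (hm : m ∈ ℳ x) (l : R) :
    componentSMul ℳ (single x l) m = l • m := by
  rw [componentSMul_single, decompose_of_mem_same ℳ hm]

theorem componentSMul_single_of_mem_of_ne {x y : X} {m : M} (hm : m ∈ ℳ x) (hxy : x ≠ y)
    (l : R) : componentSMul ℳ (single y l) m = 0 := by
  rw [componentSMul_single, decompose_of_mem_ne ℳ hm hxy, smul_zero]

theorem coe_decompose_smul (hℳ : ∀ (l : R) x, ∀ m ∈ ℳ x, l • m ∈ ℳ x) (l : R)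
    (m : M) (x : X) : (decompose ℳ (l • m) x : M) = l • (decompose ℳ m x : M) :=
  decompose_map_of_mapsTo ℳ (f := DistribSMul.toAddMonoidHom M l) (σ := id)
    Function.injective_id (hℳ l) m x

theorem coe_decompose_componentSMul (hℳ : ∀ (l : R) x, ∀ m ∈ ℳ x, l • m ∈ ℳ x)
    (c : X →₀ R) (m : M) (x : X) :
    (decompose ℳ (componentSMul ℳ c m) x : M) = c x • (decompose ℳ m x : M) := by
  rw [componentSMul, Finsupp.sum, decompose_sum, DFinsupp.finsetSum_apply,
    AddSubmonoidClass.coe_finsetSum]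
  refine (Finset.sum_eq_single x (fun y _ hyx => ?_) fun hx => ?_).trans ?_
  · exact decompose_of_mem_ne ℳ (hℳ _ _ _ (decompose ℳ m y).2) hyx
  · rw [notMem_support_iff.1 hx, zero_smul, decompose_zero, zero_apply, ZeroMemClass.coe_zero]
  · exact decompose_of_mem_same ℳ (hℳ _ _ _ (decompose ℳ m x).2)

theorem componentSMul_add_right (hℳ : ∀ (l : R) x, ∀ m ∈ ℳ x, l • m ∈ ℳ x)
    (c : X →₀ R) (m m' : M) :
    componentSMul ℳ c (m + m') = componentSMul ℳ c m + componentSMul ℳ c m' :=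
  decompose_ext ℳ fun x => by
    simp only [coe_decompose_componentSMul hℳ, decompose_add, add_apply, AddMemClass.coe_add,
      smul_add]

theorem componentSMul_mul (hℳ : ∀ (l : R) x, ∀ m ∈ ℳ x, l • m ∈ ℳ x)
    (c c' : X →₀ R) (m : M) :
    componentSMul ℳ (c * c') m = componentSMul ℳ c (componentSMul ℳ c' m) :=
  decompose_ext ℳ fun x => by
    simp only [coe_decompose_componentSMul hℳ, mul_apply, mul_smul]

theorem componentSMul_smul (hℳ : ∀ (l : R) x, ∀ m ∈ ℳ x, l • m ∈ ℳ x) (l : R)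
    (c : X →₀ R) (m : M) : componentSMul ℳ (l • c) m = componentSMul ℳ c (l • m) :=
  decompose_ext ℳ fun x => by
    simp only [coe_decompose_componentSMul hℳ, coe_decompose_smul hℳ, coe_smul, Pi.smul_apply,
      smul_eq_mul, mul_smul, smul_comm l]

theorem map_componentSMul (hℳ : ∀ (l : R) x, ∀ m ∈ ℳ x, l • m ∈ ℳ x) {ψ : M →+ M}
    {σ : X ≃ X} {τ : R → R} (hψ : ∀ (l : R) m, ψ (l • m) = τ l • ψ m)
    (hmaps : ∀ x, ∀ m ∈ ℳ x, ψ m ∈ ℳ (σ x)) {c c' : X →₀ R}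
    (hc : ∀ x, c' (σ x) = τ (c x)) (m : M) :
    ψ (componentSMul ℳ c m) = componentSMul ℳ c' (ψ m) := by
  refine decompose_ext ℳ fun y => ?_
  obtain ⟨x, rfl⟩ := σ.surjective y
  rw [decompose_map_of_mapsTo ℳ σ.injective hmaps, coe_decompose_componentSMul hℳ,
    coe_decompose_componentSMul hℳ, decompose_map_of_mapsTo ℳ σ.injective hmaps, hψ, hc]

end ComponentSMul

end DirectSum

theorem iSupIndep_of_annihilators {ι M : Type*} [AddCommGroup M] {N : ι → AddSubgroup M}
    (K : ι → Set (M →+ M)) (hkill : ∀ i j, i ≠ j → ∀ f ∈ K i, ∀ m ∈ N j, f m = 0)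
    (hsep : ∀ i, ∀ m ∈ N i, (∀ f ∈ K i, f m = 0) → m = 0) : iSupIndep N := by
  refine iSupIndep_def.2 fun i => AddSubgroup.disjoint_def.2 fun {m} hm hm' => ?_
  refine hsep i m hm fun f hf => ?_
  have hker : ⨆ j, ⨆ (_ : j ≠ i), N j ≤ f.ker :=
    iSup₂_le fun j hji m' hm' => hkill i j (Ne.symm hji) f hf m' hm'
  exact hker hm'

theorem AddSubgroup.exists_fin_sum_of_mem_closure {M : Type*} [AddCommGroup M] {s : Set M}
    (hs : ∀ m ∈ s, -m ∈ s) {m : M} (hm : m ∈ closure s) :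
    ∃ (n : ℕ) (f : Fin n → M), (∀ i, f i ∈ s) ∧ m = ∑ i, f i := by
  have hs' : s ∪ -s = s := Set.union_eq_left.2 fun m hm => by simpa using hs _ hm
  have hm' : m ∈ AddSubmonoid.closure s := by
    rw [← hs', ← closure_toAddSubmonoid]; exact hm
  obtain ⟨l, hl, rfl⟩ := AddSubmonoid.exists_list_of_mem_closure hm'
  exact ⟨l.length, fun i => l[i], fun i => hl _ (List.getElem_mem _),
    (Fin.sum_univ_getElem l).symm⟩

section Representation

variable {C M : Type*} [NonUnitalRing C] [AddCommGroup M]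

def pairingToEnd (dot : C → M → M) (add_dot : ∀ c c' m, dot (c + c') m = dot c m + dot c' m)
    (dot_add : ∀ c m m', dot c (m + m') = dot c m + dot c m')
    (mul_dot : ∀ c c' m, dot (c * c') m = dot c (dot c' m)) : C →ₙ+* AddMonoid.End M where
  toFun c := AddMonoidHom.mk' (dot c) (dot_add c)
  map_mul' c c' := AddMonoidHom.ext (mul_dot c c')
  map_zero' := AddMonoidHom.ext fun m => (by simpa using add_dot 0 0 m : dot 0 m = 0)
  map_add' c c' := AddMonoidHom.ext (add_dot c c')

theorem NonUnitalRingHom.map_mul_apply (ρ : C →ₙ+* AddMonoid.End M) (c c' : C) (m : M) :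
    ρ (c * c') m = ρ c (ρ c' m) := by
  rw [map_mul]; rfl

theorem NonUnitalRingHom.sum_apply {ι : Type*} (ρ : C →ₙ+* AddMonoid.End M) (s : Finset ι)
    (c : ι → C) (m : M) : ρ (∑ i ∈ s, c i) m = ∑ i ∈ s, ρ (c i) m := by
  rw [map_sum]; exact AddMonoidHom.finsetSum_apply _ _ _

def IsFull (ρ : C →ₙ+* AddMonoid.End M) : Prop :=
  AddSubgroup.closure {m | ∃ c m', m = ρ c m'} = ⊤

variable {ρ : C →ₙ+* AddMonoid.End M}

theorem IsFull.addMonoidHom_ext {N : Type*} [AddCommGroup N] (hρ : IsFull ρ) {f g : M →+ N}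
    (h : ∀ c m, f (ρ c m) = g (ρ c m)) : f = g :=
  AddMonoidHom.eq_of_eqOn_dense hρ (by rintro _ ⟨c, m, rfl⟩; exact h c m)

theorem IsFull.map_smul_of_twist {R : Type*} [Semiring R] [Module R C] [Module R M]
    (hρ : IsFull ρ) (hsmul : ∀ (l : R) c m, ρ (l • c) m = l • ρ c m) {τ : R → R}
    {ψ : M →+ M} {φ : C → C} {ψ' : M → M}
    (hφ : ∀ (l : R) c, φ (l • c) = τ l • φ c)
    (hψ : ∀ c m, ψ (ρ c m) = ρ (φ c) (ψ' m)) (l : R) (m : M) :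
    ψ (l • m) = τ l • ψ m := by
  refine DFunLike.congr_fun (hρ.addMonoidHom_ext (f := ψ.comp (DistribSMul.toAddMonoidHom M l))
    (g := (DistribSMul.toAddMonoidHom M (τ l)).comp ψ) fun c m => ?_) m
  simp only [AddMonoidHom.comp_apply, DistribSMul.toAddMonoidHom_apply]
  rw [← hsmul, hψ, hφ, hsmul, hψ]

end Representation

theorem Finsupp.single_one_mul_single_one_of_ne {X R : Type*} [MulZeroOneClass R] {x y : X}
    (h : x ≠ y) : single x (1 : R) * single y 1 = 0 := by
  ext z
  rw [mul_apply, coe_zero, Pi.zero_apply]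
  by_cases hz : z = x
  · subst hz; rw [single_eq_of_ne h, mul_zero]
  · rw [single_eq_of_ne hz, zero_mul]

section ChiComponent

variable {X R M : Type*} [CommRing R] [AddCommGroup M]

noncomputable def chiComponent (ρ : (X →₀ R) →ₙ+* AddMonoid.End M) (x : X) :
    AddSubgroup M :=
  (ρ (single x 1) : M →+ M).range

variable {ρ : (X →₀ R) →ₙ+* AddMonoid.End M}

theorem mem_chiComponent {x : X} {m : M} :
    m ∈ chiComponent ρ x ↔ ∃ u, ρ (single x 1) u = m :=
  Iff.rfl

theorem apply_single_one_of_mem_chiComponent {x : X} {m : M} (hm : m ∈ chiComponent ρ x) :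
    ρ (single x 1) m = m := by
  obtain ⟨u, rfl⟩ := mem_chiComponent.1 hm
  rw [← NonUnitalRingHom.map_mul_apply, ← single_mul, one_mul]

theorem apply_single_one_eq_zero_of_mem_chiComponent {x y : X} (hxy : x ≠ y) {m : M}
    (hm : m ∈ chiComponent ρ y) : ρ (single x 1) m = 0 := by
  obtain ⟨u, rfl⟩ := mem_chiComponent.1 hm
  rw [← NonUnitalRingHom.map_mul_apply, single_one_mul_single_one_of_ne hxy, map_zero]
  rfl

theorem apply_single_one_mem_chiComponent (x : X) {y : X} {m : M} (hm : m ∈ chiComponent ρ y) :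
    ρ (single x 1) m ∈ chiComponent ρ y := by
  obtain ⟨u, rfl⟩ := mem_chiComponent.1 hm
  exact mem_chiComponent.2 ⟨ρ (single x 1) u, by
    rw [← NonUnitalRingHom.map_mul_apply, mul_comm, NonUnitalRingHom.map_mul_apply]⟩

theorem iSup_chiComponent_eq_top (hρ : IsFull ρ) : iSup (chiComponent ρ) = ⊤ := by
  rw [eq_top_iff, ← hρ, AddSubgroup.closure_le]
  rintro _ ⟨c, m, rfl⟩
  induction c using Finsupp.induction_linear with
  | zero => rw [map_zero]; exact zero_mem _
  | add c c' hc hc' => rw [map_add]; exact add_mem hc hc'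
  | single x l =>
    exact AddSubgroup.mem_iSup_of_mem x <| mem_chiComponent.2 ⟨ρ (single x l) m, by
      rw [← NonUnitalRingHom.map_mul_apply, ← single_mul, one_mul]⟩

theorem isInternal_chiComponent [DecidableEq X] (hρ : IsFull ρ) :
    DirectSum.IsInternal (chiComponent ρ) := by
  refine DirectSum.isInternal_addSubgroup_of_iSupIndep ?_ (iSup_chiComponent_eq_top hρ)
  refine iSupIndep_of_annihilators (fun x => {(ρ (single x 1) : M →+ M)}) ?_ ?_
  · rintro x y hxy _ rfl m hm
    exact apply_single_one_eq_zero_of_mem_chiComponent hxy hm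
  · intro x m hm hkill
    rw [← apply_single_one_of_mem_chiComponent hm]
    exact hkill _ rfl

theorem coe_decompose_chiComponent [DecidableEq X] [DirectSum.Decomposition (chiComponent ρ)]
    (m : M) (x : X) : (DirectSum.decompose (chiComponent ρ) m x : M) = ρ (single x 1) m := by
  let m' := DirectSum.decompose (chiComponent ρ) m x
  calc (m' : M) = ρ (single x 1) m' := (apply_single_one_of_mem_chiComponent m'.2).symm
    _ = DirectSum.decompose (chiComponent ρ) (ρ (single x 1) m) x :=
      (DirectSum.decompose_map_of_mapsTo _ (σ := id) Function.injective_id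
        (fun y _ hm => apply_single_one_mem_chiComponent x hm) m x).symm
    _ = ρ (single x 1) m := DirectSum.decompose_of_mem_same _ (mem_chiComponent.2 ⟨m, rfl⟩)

theorem exists_eq_sum_single_one_apply (hρ : IsFull ρ) (m : M) :
    ∃ s : Finset X, m = ∑ x ∈ s, ρ (single x 1) m := by
  classical
  let _ := (isInternal_chiComponent hρ).chooseDecomposition
  refine ⟨(DirectSum.decompose (chiComponent ρ) m).support, ?_⟩
  simp_rw [← coe_decompose_chiComponent, DirectSum.sum_support_decompose]

theorem eq_of_forall_single_one_apply_eq (hρ : IsFull ρ) {m m' : M}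
    (h : ∀ x, ρ (single x 1) m = ρ (single x 1) m') : m = m' := by
  classical
  let _ := (isInternal_chiComponent hρ).chooseDecomposition
  exact DirectSum.decompose_ext (chiComponent ρ) fun x => by
    simp only [coe_decompose_chiComponent, h]

theorem IsFull.smul_apply [Module R M] (hρ : IsFull ρ)
    (hsmul : ∀ (l : R) c m, ρ (l • c) m = ρ c (l • m)) (l : R) (c : X →₀ R) (m : M) :
    ρ (l • c) m = l • ρ c m := by
  -- both sides have `χ_x`-component `(l • χ_x * c) · m`
  refine eq_of_forall_single_one_apply_eq hρ fun x => ?_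
  have hmul : single x 1 * (l • c) = l • single x 1 * c := by
    ext y; simp only [mul_apply, coe_smul, Pi.smul_apply, smul_eq_mul]; ring
  rw [← hsmul, ← NonUnitalRingHom.map_mul_apply, ← NonUnitalRingHom.map_mul_apply, hmul]

theorem smul_mem_chiComponent [Module R M] (hsmul : ∀ (l : R) c m, ρ (l • c) m = l • ρ c m)
    (l : R) {x : X} {m : M} (hm : m ∈ chiComponent ρ x) : l • m ∈ chiComponent ρ x := by
  obtain ⟨u, rfl⟩ := mem_chiComponent.1 hm
  refine mem_chiComponent.2 ⟨ρ (single x l) u, ?_⟩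
  rw [← NonUnitalRingHom.map_mul_apply, ← single_mul, one_mul, ← hsmul, smul_single_one]

end ChiComponent

section InducedComponent

variable {X R A B : Type*} [CommRing R] [NonUnitalCommRing A] [AddCommGroup B]
  (ρA : (X →₀ R) →ₙ+* AddMonoid.End A) (ρ : A →ₙ+* AddMonoid.End B)

def inducedComponent (x : X) : AddSubgroup B :=
  AddSubgroup.closure {b | ∃ a b', a ∈ chiComponent ρA x ∧ b = ρ a b'}

variable {ρA ρ}

theorem apply_mem_inducedComponent {x : X} {a : A} (ha : a ∈ chiComponent ρA x) (b : B) :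
    ρ a b ∈ inducedComponent ρA ρ x :=
  AddSubgroup.subset_closure ⟨a, b, ha, rfl⟩

theorem map_mem_inducedComponent {σ : X → X} {φ : A → A} {ψ : B →+ B} {ψ' : B → B}
    (hφ : ∀ x, ∀ a ∈ chiComponent ρA x, φ a ∈ chiComponent ρA (σ x))
    (hψ : ∀ a b, ψ (ρ a b) = ρ (φ a) (ψ' b)) {x : X} {b : B}
    (hb : b ∈ inducedComponent ρA ρ x) : ψ b ∈ inducedComponent ρA ρ (σ x) := by
  refine ((AddSubgroup.closure_le _).2 ?_ : _ ≤ (inducedComponent ρA ρ (σ x)).comap ψ) hb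
  rintro _ ⟨a, b', ha, rfl⟩
  rw [SetLike.mem_coe, AddSubgroup.mem_comap, hψ]
  exact apply_mem_inducedComponent (hφ x a ha) _

theorem smul_mem_inducedComponent [Module R A] [Module R B]
    (hsmulA : ∀ (l : R) c a, ρA (l • c) a = l • ρA c a)
    (hsmulB : ∀ (l : R) a b, ρ (l • a) b = l • ρ a b) (l : R) {x : X} {b : B}
    (hb : b ∈ inducedComponent ρA ρ x) : l • b ∈ inducedComponent ρA ρ x :=
  map_mem_inducedComponent (σ := id) (φ := (l • ·)) (ψ := DistribSMul.toAddMonoidHom B l)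
    (ψ' := id) (fun _ _ ha => smul_mem_chiComponent hsmulA l ha)
    (fun a b => (hsmulB l a b).symm) hb

theorem apply_eq_zero_of_mem_inducedComponent (hmul : ∀ c a a', ρA c (a * a') = ρA c a * a')
    {x y : X} (hxy : x ≠ y) {e : A} (he : e ∈ chiComponent ρA x) {b : B}
    (hb : b ∈ inducedComponent ρA ρ y) : ρ e b = 0 := by
  refine ((AddSubgroup.closure_le _).2 ?_ : _ ≤ (ρ e : B →+ B).ker) hb
  rintro _ ⟨a, b', ha, rfl⟩
  obtain ⟨u, rfl⟩ := mem_chiComponent.1 he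
  obtain ⟨v, rfl⟩ := mem_chiComponent.1 ha
  have hea : ρA (single x 1) u * ρA (single y 1) v = 0 := by
    rw [← hmul, mul_comm u, ← hmul, ← NonUnitalRingHom.map_mul_apply,
      single_one_mul_single_one_of_ne hxy, map_zero]
    rfl
  change ρ _ (ρ _ b') = 0
  rw [← NonUnitalRingHom.map_mul_apply, hea, map_zero]
  rfl

theorem iSup_inducedComponent_eq_top (hρA : IsFull ρA) (hρ : IsFull ρ) :
    iSup (inducedComponent ρA ρ) = ⊤ := by
  rw [eq_top_iff, ← hρ, AddSubgroup.closure_le]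
  rintro _ ⟨a, b, rfl⟩
  obtain ⟨s, hs⟩ := exists_eq_sum_single_one_apply hρA a
  rw [hs, NonUnitalRingHom.sum_apply]
  exact sum_mem fun x _ =>
    AddSubgroup.mem_iSup_of_mem x (apply_mem_inducedComponent (mem_chiComponent.2 ⟨a, rfl⟩) b)

theorem isInternal_inducedComponent [DecidableEq X] (hρA : IsFull ρA) (hρ : IsFull ρ)
    (hmul : ∀ c a a', ρA c (a * a') = ρA c a * a')
    (hsep : ∀ x, ∀ b ∈ inducedComponent ρA ρ x,
      (∀ e ∈ chiComponent ρA x, ρ e b = 0) → b = 0) :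
    DirectSum.IsInternal (inducedComponent ρA ρ) := by
  refine DirectSum.isInternal_addSubgroup_of_iSupIndep ?_ (iSup_inducedComponent_eq_top hρA hρ)
  refine iSupIndep_of_annihilators (fun x => {f | ∃ e ∈ chiComponent ρA x, f = ρ e}) ?_ ?_
  · rintro x y hxy _ ⟨e, he, rfl⟩ b hb
    exact apply_eq_zero_of_mem_inducedComponent hmul hxy he hb
  · exact fun x b hb hkill => hsep x b hb fun e he => hkill _ ⟨e, he, rfl⟩

end InducedComponent

theorem eq_zero_of_approximateUnit {A B : Type*} [NonUnitalRing A] [NormedAddCommGroup B]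
    {ρ : A →ₙ+* AddMonoid.End B} {S : Set A}
    (hS : ∀ (n : ℕ) (a : Fin n → A) (bb : Fin n → B) (b : B), (∀ i, a i ∈ S) →
      b = ∑ i, ρ (a i) (bb i) → ∀ ε > (0 : ℝ), ∃ e ∈ S, ‖ρ e b - b‖ < ε)
    {b : B} (hb : b ∈ AddSubgroup.closure {y | ∃ a b', a ∈ S ∧ y = ρ a b'})
    (hann : ∀ e ∈ S, ρ e b = 0) : b = 0 := by
  obtain ⟨n, f, hf, hsum⟩ := AddSubgroup.exists_fin_sum_of_mem_closure
    (by rintro _ ⟨a, b', ha, rfl⟩; exact ⟨a, -b', ha, (map_neg _ _).symm⟩) hb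
  choose a bb ha hfab using hf
  simp only [hfab] at hsum
  by_contra hb0
  obtain ⟨e, he, hlt⟩ := hS n a bb b ha hsum ‖b‖ (norm_pos_iff.2 hb0)
  rw [hann e he, zero_sub, norm_neg] at hlt
  exact hlt.false

section CompatibleComponentAction

variable {X R A B : Type*} [DecidableEq X] [CommRing R] [NonUnitalCommRing A] [Module R A]
  {ρA : (X →₀ R) →ₙ+* AddMonoid.End A}

/-- `T` is the map induced on `X →₀ R` by a twist of the points by `σ` and of the scalars by
`τ`: the `G`-action has `τ = id`, the star has `σ = id` and `τ = conj`, and right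
multiplication on `B` has `T = id`. -/
theorem map_componentSMul_of_twist [AddCommGroup B] [Module R B]
    {ρ : A →ₙ+* AddMonoid.End B} [DirectSum.Decomposition (inducedComponent ρA ρ)]
    (hρA : IsFull ρA) (hρ : IsFull ρ)
    (hsmulA : ∀ (l : R) c a, ρA (l • c) a = l • ρA c a)
    (hsmulB : ∀ (l : R) a b, ρ (l • a) b = l • ρ a b)
    {σ : X ≃ X} {τ : R → R} {T : (X →₀ R) → X →₀ R}
    (hT : ∀ (l : R) c, T (l • c) = τ l • T c)
    (hTχ : ∀ x, T (single x 1) = single (σ x) 1) {φ : A →+ A} {ψ : B →+ B} {ψ' : B → B}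
    (hφ : ∀ c a, φ (ρA c a) = ρA (T c) (φ a))
    (hψ : ∀ a b, ψ (ρ a b) = ρ (φ a) (ψ' b))
    {c c' : X →₀ R} (hc : ∀ x, c' (σ x) = τ (c x)) (b : B) :
    ψ (DirectSum.componentSMul (inducedComponent ρA ρ) c b) =
      DirectSum.componentSMul (inducedComponent ρA ρ) c' (ψ b) := by
  have hφσ : ∀ x, ∀ a ∈ chiComponent ρA x, φ a ∈ chiComponent ρA (σ x) := by
    intro x a ha
    obtain ⟨u, rfl⟩ := mem_chiComponent.1 ha
    exact mem_chiComponent.2 ⟨φ u, by rw [hφ, hTχ]⟩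
  exact DirectSum.map_componentSMul (ℳ := inducedComponent ρA ρ)
    (fun l _ _ hb => smul_mem_inducedComponent hsmulA hsmulB l hb)
    (hρ.map_smul_of_twist hsmulB (hρA.map_smul_of_twist hsmulA hT hφ) hψ)
    (fun x b hb => map_mem_inducedComponent hφσ hψ hb) hc b

theorem componentSMul_mul_left [NonUnitalRing B] [Module R B] {ρ : A →ₙ+* AddMonoid.End B}
    [DirectSum.Decomposition (inducedComponent ρA ρ)] (hρA : IsFull ρA) (hρ : IsFull ρ)
    (hsmulA : ∀ (l : R) c a, ρA (l • c) a = l • ρA c a)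
    (hsmulB : ∀ (l : R) a b, ρ (l • a) b = l • ρ a b)
    (hmul : ∀ a b b', ρ a (b * b') = ρ a b * b') (c : X →₀ R) (b b' : B) :
    DirectSum.componentSMul (inducedComponent ρA ρ) c (b * b') =
      DirectSum.componentSMul (inducedComponent ρA ρ) c b * b' :=
  (map_componentSMul_of_twist hρA hρ hsmulA hsmulB (σ := Equiv.refl X) (τ := id) (T := id)
    (fun _ _ => rfl) (fun _ => rfl) (φ := AddMonoidHom.id A) (ψ := AddMonoidHom.mulRight b')
    (ψ' := (· * b')) (fun _ _ => rfl) (fun a b => (hmul a b b').symm) (fun _ => rfl) b).symm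

theorem map_componentSMul_mapDomain [AddCommGroup B] [Module R B] {ρ : A →ₙ+* AddMonoid.End B}
    [DirectSum.Decomposition (inducedComponent ρA ρ)] (hρA : IsFull ρA) (hρ : IsFull ρ)
    (hsmulA : ∀ (l : R) c a, ρA (l • c) a = l • ρA c a)
    (hsmulB : ∀ (l : R) a b, ρ (l • a) b = l • ρ a b) {G : Type*} [Group G] [MulAction G X]
    (g : G) {φ : A →+ A} {ψ : B →+ B}
    (hφ : ∀ c a, φ (ρA c a) = ρA (mapDomain (g • ·) c) (φ a))
    (hψ : ∀ a b, ψ (ρ a b) = ρ (φ a) (ψ b)) (c : X →₀ R) (b : B) :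
    ψ (DirectSum.componentSMul (inducedComponent ρA ρ) c b) =
      DirectSum.componentSMul (inducedComponent ρA ρ) (mapDomain (g • ·) c) (ψ b) :=
  map_componentSMul_of_twist hρA hρ hsmulA hsmulB (σ := MulAction.toPerm g) (τ := id)
    (fun l c => mapDomain_smul l c) (fun _ => mapDomain_single) hφ hψ
    (fun x => mapDomain_apply (MulAction.injective g) c x) b

theorem star_componentSMul [StarRing R] [StarAddMonoid A] [AddCommGroup B] [StarAddMonoid B]
    [Module R B] {ρ : A →ₙ+* AddMonoid.End B}
    [DirectSum.Decomposition (inducedComponent ρA ρ)] (hρA : IsFull ρA) (hρ : IsFull ρ)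
    (hsmulA : ∀ (l : R) c a, ρA (l • c) a = l • ρA c a)
    (hsmulB : ∀ (l : R) a b, ρ (l • a) b = l • ρ a b)
    (hφ : ∀ c a, star (ρA c a) = ρA (mapRange (starRingEnd R) (map_zero _) c) (star a))
    (hψ : ∀ a b, star (ρ a b) = ρ (star a) (star b)) (c : X →₀ R) (b : B) :
    star (DirectSum.componentSMul (inducedComponent ρA ρ) c b) =
      DirectSum.componentSMul (inducedComponent ρA ρ)
        (mapRange (starRingEnd R) (map_zero _) c) (star b) :=
  map_componentSMul_of_twist hρA hρ hsmulA hsmulB (σ := Equiv.refl X) (τ := starRingEnd R)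
    (T := mapRange (starRingEnd R) (map_zero _))
    (fun l c => by ext; simp) (fun _ => by rw [mapRange_single, map_one]; rfl)
    (φ := (starAddEquiv : A ≃+ A).toAddMonoidHom)
    (ψ := (starAddEquiv : B ≃+ B).toAddMonoidHom) (ψ' := star) hφ hψ
    (fun _ => mapRange_apply) b

end CompatibleComponentAction

theorem stmt14_general {G : Type*} [Group G] (H : Subgroup G)
    {A : Type*} [NonUnitalCommRing A] [StarRing A] [Module ℂ A]
    {B : Type*} [NonUnitalNormedRing B] [StarRing B] [Module ℂ B]
    (hBcomm : ∀ b b' : B, b * b' = b' * b)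
    -- `G`-actions on `A` and `B` by `*`-automorphisms:
    (actA : G → A → A) (actB : G → B → B)
    (hactA_add : ∀ g a b, actA g (a + b) = actA g a + actA g b)
    (hactB_add : ∀ g b b', actB g (b + b') = actB g b + actB g b')
    -- the full compatible `(G, ℂ^(G/H))`-structure on `A`:
    (dotJA : ((G ⧸ H) →₀ ℂ) → A → A)
    (hJA_addc : ∀ c c' a, dotJA (c + c') a = dotJA c a + dotJA c' a)
    (hJA_adda : ∀ c a a', dotJA c (a + a') = dotJA c a + dotJA c a')
    (hJA_mulc : ∀ c c' a, dotJA (c * c') a = dotJA c (dotJA c' a))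
    (hJA_mul_left : ∀ c a a', dotJA c (a * a') = dotJA c a * a')
    (hJA_smul : ∀ (l : ℂ) c a, dotJA (l • c) a = dotJA c (l • a))
    (hJA_equiv : ∀ g c a,
      actA g (dotJA c a) = dotJA (Finsupp.mapDomain (fun x : G ⧸ H => g • x) c) (actA g a))
    (hJA_star : ∀ c a,
      star (dotJA c a) = dotJA (Finsupp.mapRange (starRingEnd ℂ) (map_zero _) c) (star a))
    (hJA_full : ∀ a : A, a ∈ AddSubgroup.closure {x : A | ∃ c a', x = dotJA c a'})
    -- the full compatible `(G, A)`-structure on `B`: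
    (dotAB : A → B → B)
    (hAB_adda : ∀ a a' b, dotAB (a + a') b = dotAB a b + dotAB a' b)
    (hAB_addb : ∀ a b b', dotAB a (b + b') = dotAB a b + dotAB a b')
    (hAB_mula : ∀ a a' b, dotAB (a * a') b = dotAB a (dotAB a' b))
    (hAB_mul_left : ∀ a b b', dotAB a (b * b') = dotAB a b * b')
    (hAB_smul : ∀ (l : ℂ) a b, dotAB (l • a) b = dotAB a (l • b))
    (hAB_smul' : ∀ (l : ℂ) a b, dotAB a (l • b) = l • dotAB a b)
    (hAB_equiv : ∀ g a b, actB g (dotAB a b) = dotAB (actA g a) (actB g b))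
    (hAB_star : ∀ a b, star (dotAB a b) = dotAB (star a) (star b))
    (hAB_full : ∀ b : B, b ∈ AddSubgroup.closure {y : B | ∃ a b', y = dotAB a b'}) :
    -- with `A_x = χ_x · A` and `B_x = A_x · B`:
    letI Ax : (G ⧸ H) → Set A := fun x => Set.range (dotJA (Finsupp.single x 1))
    letI Bx : (G ⧸ H) → AddSubgroup B := fun x =>
      AddSubgroup.closure {y : B | ∃ a b', a ∈ Ax x ∧ y = dotAB a b'}
    -- approximate units for the `A_x`:
    (∀ (x : G ⧸ H) (n : ℕ) (a : Fin n → A) (bb : Fin n → B) (b : B),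
        (∀ i, a i ∈ Ax x) → b = ∑ i, dotAB (a i) (bb i) →
        ∀ ε > (0 : ℝ), ∃ e ∈ Ax x, ‖dotAB e b - b‖ < ε) →
    -- (1) `B_x ∩ B_y = 0` for `x ≠ y`:
    (∀ x y : G ⧸ H, x ≠ y → ∀ b : B, b ∈ Bx x → b ∈ Bx y → b = 0) ∧
    -- (2) `B = ⊕_x B_x`:
    (∀ b : B, ∃ (s : Finset (G ⧸ H)) (F : (G ⧸ H) → B),
      (∀ x, F x ∈ Bx x) ∧ b = ∑ x ∈ s, F x) ∧
    (∀ (s : Finset (G ⧸ H)) (F : (G ⧸ H) → B),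
      (∀ x, F x ∈ Bx x) → ∑ x ∈ s, F x = 0 → ∀ x ∈ s, F x = 0) ∧
    -- (3) the componentwise action of `ℂ^(G/H)` is a full compatible structure, so `B`
    -- is proper over `G/H`:
    (∃ dotJB : ((G ⧸ H) →₀ ℂ) → B → B,
      (∀ c c' b, dotJB (c + c') b = dotJB c b + dotJB c' b) ∧
      (∀ c b b', dotJB c (b + b') = dotJB c b + dotJB c b') ∧
      (∀ c c' b, dotJB (c * c') b = dotJB c (dotJB c' b)) ∧
      (∀ c b b', dotJB c (b * b') = dotJB c b * b') ∧
      (∀ c b b', dotJB c (b * b') = b * dotJB c b') ∧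
      (∀ (l : ℂ) c b, dotJB (l • c) b = dotJB c (l • b)) ∧
      (∀ g c b, actB g (dotJB c b) =
        dotJB (Finsupp.mapDomain (fun x : G ⧸ H => g • x) c) (actB g b)) ∧
      (∀ c b, star (dotJB c b) =
        dotJB (Finsupp.mapRange (starRingEnd ℂ) (map_zero _) c) (star b)) ∧
      (∀ b : B, b ∈ AddSubgroup.closure {y : B | ∃ c b', y = dotJB c b'}) ∧
      -- the action is the componentwise one: `χ_x` acts as the identity on `B_x`, and
      -- `χ_y` kills `B_x` for `y ≠ x`:
      (∀ (x : G ⧸ H) (b : B), b ∈ Bx x → dotJB (Finsupp.single x 1) b = b) ∧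
      (∀ (x y : G ⧸ H), y ≠ x → ∀ b ∈ Bx x, dotJB (Finsupp.single y 1) b = 0)) := by
  classical
  intro hAU
  set ρA := pairingToEnd dotJA hJA_addc hJA_adda hJA_mulc
  set ρB := pairingToEnd dotAB hAB_adda hAB_addb hAB_mula
  have hρA : IsFull ρA := (AddSubgroup.eq_top_iff' _).2 hJA_full
  have hρB : IsFull ρB := (AddSubgroup.eq_top_iff' _).2 hAB_full
  have hsmulA := hρA.smul_apply hJA_smul
  have hsmulB : ∀ (l : ℂ) a b, ρB (l • a) b = l • ρB a b :=
    fun l a b => (hAB_smul l a b).trans (hAB_smul' l a b)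
  set ℬ := inducedComponent ρA ρB
  have hℬ : ∀ (l : ℂ) x, ∀ b ∈ ℬ x, l • b ∈ ℬ x :=
    fun l _ _ hb => smul_mem_inducedComponent hsmulA hsmulB l hb
  let _ := (isInternal_inducedComponent hρA hρB hJA_mul_left
    fun x _ hb => eq_zero_of_approximateUnit (hAU x) hb).chooseDecomposition
  have hmul := componentSMul_mul_left hρA hρB hsmulA hsmulB hAB_mul_left
  refine ⟨fun x y hxy b hx hy => by_contra fun hb =>
      hxy (DirectSum.degree_eq_of_mem_mem ℬ hx hy hb),
    fun b => ⟨_, fun x => DirectSum.decompose ℬ b x, fun x => (DirectSum.decompose ℬ b x).2,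
      (DirectSum.sum_support_decompose ℬ b).symm⟩,
    fun s F hF hs x hx => DirectSum.eq_zero_of_sum_eq_zero ℬ hF hs hx,
    DirectSum.componentSMul ℬ, DirectSum.componentSMul_add_left ℬ,
    DirectSum.componentSMul_add_right hℬ, DirectSum.componentSMul_mul hℬ, hmul,
    fun c b b' => by rw [hBcomm b, hmul, hBcomm], DirectSum.componentSMul_smul hℬ,
    fun g => map_componentSMul_mapDomain hρA hρB hsmulA hsmulB g
      (φ := AddMonoidHom.mk' (actA g) (hactA_add g))
      (ψ := AddMonoidHom.mk' (actB g) (hactB_add g)) (hJA_equiv g) (hAB_equiv g),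
    star_componentSMul hρA hρB hsmulA hsmulB hJA_star hAB_star,
    DirectSum.mem_closure_componentSMul ℬ,
    fun x b hb => (DirectSum.componentSMul_single_of_mem (ℳ := ℬ) hb 1).trans (one_smul ℂ b),
    fun x y hyx b hb => DirectSum.componentSMul_single_of_mem_of_ne (ℳ := ℬ) hb hyx.symm 1⟩

/-- Lemma `iprop-jprop`: let `G` be a group, `H ≤ G`, and let `A`, `B` be
commutative complex `G`-`*`-algebras, with `A` proper over `G/H` (i.e. `A` carries a full
compatible `(G, ℂ^(G/H))`-structure `dotJA`, where `ℂ^(G/H) = (G⧸H) →₀ ℂ`), and with `B`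
carrying a full compatible `(G, A)`-structure `dotAB`.  Assume each `A_x = χ_x · A`
admits a bounded approximate unit in the purely algebraic sense stated in `hAU`.  Then,
with `B_x = A_x · B`: `B_x ∩ B_y = 0` for `x ≠ y`, `B = ⊕_x B_x`, and the action
`(∑ λ_x χ_x)·(∑ b_x) = ∑ λ_x b_x` defines a full compatible `(G, ℂ^(G/H))`-structure on
`B` for which `χ_x` acts as the identity on `B_x`; hence `B` is proper over `G/H`. -/
theorem stmt14 {G : Type*} [Group G] (H : Subgroup G)
    {A : Type*} [NonUnitalCommRing A] [StarRing A] [Module ℂ A]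
    {B : Type*} [NonUnitalNormedRing B] [StarRing B] [Module ℂ B]
    (hBcomm : ∀ b b' : B, b * b' = b' * b)
    -- `G`-actions on `A` and `B` by `*`-automorphisms:
    (actA : G → A → A) (actB : G → B → B)
    (hactA_one : ∀ a, actA 1 a = a)
    (hactA_mul : ∀ g g' a, actA g (actA g' a) = actA (g * g') a)
    (hactA_add : ∀ g a b, actA g (a + b) = actA g a + actA g b)
    (hactA_ring : ∀ g a b, actA g (a * b) = actA g a * actA g b)
    (hactA_star : ∀ g a, actA g (star a) = star (actA g a))
    (hactB_one : ∀ b, actB 1 b = b)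
    (hactB_mul : ∀ g g' b, actB g (actB g' b) = actB (g * g') b)
    (hactB_add : ∀ g b b', actB g (b + b') = actB g b + actB g b')
    (hactB_ring : ∀ g b b', actB g (b * b') = actB g b * actB g b')
    (hactB_star : ∀ g b, actB g (star b) = star (actB g b))
    -- the full compatible `(G, ℂ^(G/H))`-structure on `A`:
    (dotJA : ((G ⧸ H) →₀ ℂ) → A → A)
    (hJA_addc : ∀ c c' a, dotJA (c + c') a = dotJA c a + dotJA c' a)
    (hJA_adda : ∀ c a a', dotJA c (a + a') = dotJA c a + dotJA c a')
    (hJA_mulc : ∀ c c' a, dotJA (c * c') a = dotJA c (dotJA c' a))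
    (hJA_mul_left : ∀ c a a', dotJA c (a * a') = dotJA c a * a')
    (hJA_mul_right : ∀ c a a', dotJA c (a * a') = a * dotJA c a')
    (hJA_smul : ∀ (l : ℂ) c a, dotJA (l • c) a = dotJA c (l • a))
    (hJA_equiv : ∀ g c a,
      actA g (dotJA c a) = dotJA (Finsupp.mapDomain (fun x : G ⧸ H => g • x) c) (actA g a))
    (hJA_star : ∀ c a,
      star (dotJA c a) = dotJA (Finsupp.mapRange (starRingEnd ℂ) (map_zero _) c) (star a))
    (hJA_full : ∀ a : A, a ∈ AddSubgroup.closure {x : A | ∃ c a', x = dotJA c a'})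
    -- the full compatible `(G, A)`-structure on `B`:
    (dotAB : A → B → B)
    (hAB_adda : ∀ a a' b, dotAB (a + a') b = dotAB a b + dotAB a' b)
    (hAB_addb : ∀ a b b', dotAB a (b + b') = dotAB a b + dotAB a b')
    (hAB_mula : ∀ a a' b, dotAB (a * a') b = dotAB a (dotAB a' b))
    (hAB_mul_left : ∀ a b b', dotAB a (b * b') = dotAB a b * b')
    (hAB_mul_right : ∀ a b b', dotAB a (b * b') = b * dotAB a b')
    (hAB_smul : ∀ (l : ℂ) a b, dotAB (l • a) b = dotAB a (l • b))
    (hAB_smul' : ∀ (l : ℂ) a b, dotAB a (l • b) = l • dotAB a b)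
    (hAB_equiv : ∀ g a b, actB g (dotAB a b) = dotAB (actA g a) (actB g b))
    (hAB_star : ∀ a b, star (dotAB a b) = dotAB (star a) (star b))
    (hAB_full : ∀ b : B, b ∈ AddSubgroup.closure {y : B | ∃ a b', y = dotAB a b'}) :
    -- with `A_x = χ_x · A` and `B_x = A_x · B`:
    letI Ax : (G ⧸ H) → Set A := fun x => Set.range (dotJA (Finsupp.single x 1))
    letI Bx : (G ⧸ H) → AddSubgroup B := fun x =>
      AddSubgroup.closure {y : B | ∃ a b', a ∈ Ax x ∧ y = dotAB a b'}
    -- approximate units for the `A_x`: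
    (∀ (x : G ⧸ H) (n : ℕ) (a : Fin n → A) (bb : Fin n → B) (b : B),
        (∀ i, a i ∈ Ax x) → b = ∑ i, dotAB (a i) (bb i) →
        ∀ ε > (0 : ℝ), ∃ e ∈ Ax x, ‖dotAB e b - b‖ < ε) →
    -- (1) `B_x ∩ B_y = 0` for `x ≠ y`:
    (∀ x y : G ⧸ H, x ≠ y → ∀ b : B, b ∈ Bx x → b ∈ Bx y → b = 0) ∧
    -- (2) `B = ⊕_x B_x`:
    (∀ b : B, ∃ (s : Finset (G ⧸ H)) (F : (G ⧸ H) → B),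
      (∀ x, F x ∈ Bx x) ∧ b = ∑ x ∈ s, F x) ∧
    (∀ (s : Finset (G ⧸ H)) (F : (G ⧸ H) → B),
      (∀ x, F x ∈ Bx x) → ∑ x ∈ s, F x = 0 → ∀ x ∈ s, F x = 0) ∧
    -- (3) the componentwise action of `ℂ^(G/H)` is a full compatible structure, so `B`
    -- is proper over `G/H`:
    (∃ dotJB : ((G ⧸ H) →₀ ℂ) → B → B,
      (∀ c c' b, dotJB (c + c') b = dotJB c b + dotJB c' b) ∧
      (∀ c b b', dotJB c (b + b') = dotJB c b + dotJB c b') ∧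
      (∀ c c' b, dotJB (c * c') b = dotJB c (dotJB c' b)) ∧
      (∀ c b b', dotJB c (b * b') = dotJB c b * b') ∧
      (∀ c b b', dotJB c (b * b') = b * dotJB c b') ∧
      (∀ (l : ℂ) c b, dotJB (l • c) b = dotJB c (l • b)) ∧
      (∀ g c b, actB g (dotJB c b) =
        dotJB (Finsupp.mapDomain (fun x : G ⧸ H => g • x) c) (actB g b)) ∧
      (∀ c b, star (dotJB c b) =
        dotJB (Finsupp.mapRange (starRingEnd ℂ) (map_zero _) c) (star b)) ∧
      (∀ b : B, b ∈ AddSubgroup.closure {y : B | ∃ c b', y = dotJB c b'}) ∧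
      -- the action is the componentwise one: `χ_x` acts as the identity on `B_x`, and
      -- `χ_y` kills `B_x` for `y ≠ x`:
      (∀ (x : G ⧸ H) (b : B), b ∈ Bx x → dotJB (Finsupp.single x 1) b = b) ∧
      (∀ (x y : G ⧸ H), y ≠ x → ∀ b ∈ Bx x, dotJB (Finsupp.single y 1) b = 0)) :=
  stmt14_general H hBcomm actA actB hactA_add hactB_add dotJA hJA_addc hJA_adda hJA_mulc
    hJA_mul_left hJA_smul hJA_equiv hJA_star hJA_full dotAB hAB_adda hAB_addb hAB_mula hAB_mul_left
    hAB_smul hAB_smul' hAB_equiv hAB_star hAB_full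
end
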